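/- (Lions' generalized Lax–Milgram) Let $(F,\|\cdot\|_F)$ be a real Hilbert space and $\Phi \subseteq F$ a subspace equipped with a pre-Hilbert norm $|||\cdot|||$. Let $E : F \times \Phi \to \mathbb{R}$ be a bilinear form such that: (i) there is $C_1 > 0$ with $\|\varphi\|_F \le C_1 |||\varphi|||$ for all $\varphi \in \Phi$; (ii) for each fixed $\varphi \in \Phi$, the map $u \mapsto E(u,\varphi)$ is continuous on $F$; (iii) there is $C_2 > 0$ with $E(\varphi,\varphi) \ge C_2 |||\varphi|||^2$ for all $\varphi \in \Phi$. Then for every linear functional $L : \Phi \to \mathbb{R}$ continuous with respect to $|||\cdot|||$, there exists $u \in F$ with $E(u,\varphi) = L(\varphi)$ for all $\varphi \in \Phi$. -/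

import Mathlib

/-!
By Riesz, `E (·) φ = ⟪T φ, ·⟫` for a linear `T : G → F`. Coercivity and the embedding give
`C₂ ‖φ‖² ≤ ⟪T φ, ι φ⟫ ≤ C₁ ‖T φ‖ ‖φ‖`, so `‖φ‖ ≤ (C₁ / C₂) ‖T φ‖` and `T φ ↦ L φ` is a
well-defined bounded functional on the range of `T`. Extend it to `F` by Hahn–Banach and
represent the extension by Riesz as `⟪u, ·⟫`; then `E u φ = ⟪T φ, u⟫ = L φ`.
-/

open scoped RealInnerProductSpace

theorem exists_linearMap_inner_eq_of_continuous {F G : Type*}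
    [NormedAddCommGroup F] [InnerProductSpace ℝ F] [CompleteSpace F] [AddCommGroup G] [Module ℝ G]
    (E : F →ₗ[ℝ] G →ₗ[ℝ] ℝ) (hcont : ∀ φ, Continuous fun u => E u φ) :
    ∃ T : G →ₗ[ℝ] F, ∀ φ u, ⟪T φ, u⟫ = E u φ := by
  let T : G → F := fun φ => (InnerProductSpace.toDual ℝ F).symm ⟨E.flip φ, hcont φ⟩
  have hT : ∀ φ u, ⟪T φ, u⟫ = E u φ := fun _ _ => InnerProductSpace.toDual_symm_apply
  refine ⟨{ toFun := T, map_add' := fun φ ψ => ?_, map_smul' := fun c φ => ?_ }, hT⟩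
  · exact ext_inner_right ℝ fun u => by simp only [inner_add_left, hT, map_add]
  · exact ext_inner_right ℝ fun u => by
      simp only [real_inner_smul_left, hT, map_smul, smul_eq_mul, RingHom.id_apply]

theorem norm_le_div_mul_norm_of_le_inner {F G : Type*}
    [NormedAddCommGroup F] [InnerProductSpace ℝ F] [NormedAddCommGroup G]
    {C₁ C₂ : ℝ} (hC₁ : 0 ≤ C₁) (hC₂ : 0 < C₂) {x : G} {y z : F}
    (hz : ‖z‖ ≤ C₁ * ‖x‖) (hxyz : C₂ * ‖x‖ ^ 2 ≤ ⟪y, z⟫) : ‖x‖ ≤ C₁ / C₂ * ‖y‖ := by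
  have key : C₂ * ‖x‖ ^ 2 ≤ ‖y‖ * (C₁ * ‖x‖) := calc
    C₂ * ‖x‖ ^ 2 ≤ ⟪y, z⟫ := hxyz
    _ ≤ ‖y‖ * ‖z‖ := real_inner_le_norm y z
    _ ≤ ‖y‖ * (C₁ * ‖x‖) := by gcongr
  rw [div_mul_eq_mul_div, le_div_iff₀ hC₂]
  rcases (norm_nonneg x).eq_or_lt with hx | hx
  · rw [← hx, zero_mul]
    exact mul_nonneg hC₁ (norm_nonneg y)
  · nlinarith

theorem exists_strongDual_comp_eq_of_norm_le_mul_norm {𝕜 G F : Type*} [RCLike 𝕜]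
    [AddCommGroup G] [Module 𝕜 G] [NormedAddCommGroup F] [NormedSpace 𝕜 F]
    (T : G →ₗ[𝕜] F) (L : G →ₗ[𝕜] 𝕜) (K : ℝ) (hL : ∀ φ, ‖L φ‖ ≤ K * ‖T φ‖) :
    ∃ g : StrongDual 𝕜 F, ∀ φ, g (T φ) = L φ := by
  have hker : LinearMap.ker T ≤ LinearMap.ker L := fun φ hφ => by
    simpa [LinearMap.mem_ker.mp hφ] using hL φ
  let ℓ : LinearMap.range T →ₗ[𝕜] 𝕜 := (LinearMap.ker T).liftQ L hker ∘ₗ T.quotKerEquivRange.symm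
  have hℓ : ∀ φ, ℓ (T.rangeRestrict φ) = L φ := fun φ =>
    congrArg _ (T.quotKerEquivRange_symm_apply_image φ _)
  have hbound : ∀ x, ‖ℓ x‖ ≤ K * ‖x‖ := by
    rintro ⟨_, φ, rfl⟩
    show ‖ℓ (T.rangeRestrict φ)‖ ≤ K * ‖T φ‖
    rw [hℓ]
    exact hL φ
  obtain ⟨g, hg, -⟩ := exists_extension_norm_eq _ (ℓ.mkContinuous K hbound)
  exact ⟨g, fun φ => (hg (T.rangeRestrict φ)).trans (hℓ φ)⟩

/-- Lions' generalized Lax–Milgram theorem: `F` a Hilbert space, `G` a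
pre-Hilbert space continuously embedded in `F` via `ι`, `E` bilinear with
`E(·,φ)` continuous on `F` for each `φ` and coercive on the diagonal of the
embedding; then every `G`-continuous linear functional `L` is represented:
there is `u ∈ F` with `E(u,φ) = L(φ)` for all `φ`. -/
theorem stmt13 {F G : Type*}
    [NormedAddCommGroup F] [InnerProductSpace ℝ F] [CompleteSpace F]
    [NormedAddCommGroup G] [InnerProductSpace ℝ G]
    (ι : G →ₗ[ℝ] F) (E : F →ₗ[ℝ] G →ₗ[ℝ] ℝ) (L : G →ₗ[ℝ] ℝ)
    (C₁ C₂ CL : ℝ) (hC₁ : 0 < C₁) (hC₂ : 0 < C₂)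
    (hemb : ∀ φ : G, ‖ι φ‖ ≤ C₁ * ‖φ‖)
    (hcont : ∀ φ : G, Continuous fun u : F => E u φ)
    (hcoer : ∀ φ : G, E (ι φ) φ ≥ C₂ * ‖φ‖ ^ 2)
    (hL : ∀ φ : G, |L φ| ≤ CL * ‖φ‖) :
    ∃ u : F, ∀ φ : G, E u φ = L φ := by
  obtain ⟨T, hT⟩ := exists_linearMap_inner_eq_of_continuous E hcont
  have hTφ (φ : G) : ‖φ‖ ≤ C₁ / C₂ * ‖T φ‖ :=
    norm_le_div_mul_norm_of_le_inner hC₁.le hC₂ (hemb φ) ((hT φ (ι φ)).symm ▸ hcoer φ)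
  have hLT (φ : G) : ‖L φ‖ ≤ max CL 0 * (C₁ / C₂) * ‖T φ‖ := calc
    ‖L φ‖ ≤ CL * ‖φ‖ := hL φ
    _ ≤ max CL 0 * ‖φ‖ := mul_le_mul_of_nonneg_right (le_max_left CL 0) (norm_nonneg φ)
    _ ≤ max CL 0 * (C₁ / C₂ * ‖T φ‖) :=
      mul_le_mul_of_nonneg_left (hTφ φ) (le_max_right CL 0)
    _ = max CL 0 * (C₁ / C₂) * ‖T φ‖ := by ring
  obtain ⟨g, hg⟩ := exists_strongDual_comp_eq_of_norm_le_mul_norm T L _ hLT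
  refine ⟨(InnerProductSpace.toDual ℝ F).symm g, fun φ => ?_⟩
  rw [← hT, real_inner_comm, InnerProductSpace.toDual_symm_apply, hg]
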